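/- Let n ≥ 2 and let P = {x ∈ ℝⁿ : x_n ≥ x₁² + ⋯ + x_{n−1}²} be the solid (unbounded) elliptic paraboloid, with section function A_P(ξ,t) defined as the (n−1)-dimensional Hausdorff measure of P ∩ {x : x·ξ = t}. Then there exist nonzero polynomials q ∈ ℝ[x₁,…,xₙ] and p ∈ ℝ[x₁,…,xₙ,t] such that q(ξ)·A_P(ξ,t)² + p(ξ,t) = 0 for all ξ ∈ S^{n−1} and all t ∈ ℝ with 0 < A_P(ξ,t) < ∞. -/

import Mathlib

open MeasureTheory

/-- The (possibly infinite) section function of a closed set `P`: the `(n-1)`-dimensional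
Hausdorff measure of the hyperplane cross-section `P ∩ {x · ξ = t}`. -/
noncomputable def secFunE {n : ℕ} (P : Set (EuclideanSpace ℝ (Fin n)))
    (ξ : EuclideanSpace ℝ (Fin n)) (t : ℝ) : ENNReal :=
  μH[((n : ℝ) - 1)] (P ∩ {x : EuclideanSpace ℝ (Fin n) | (inner ℝ x ξ : ℝ) = t})

/-- The solid elliptic paraboloid `{x : xₙ ≥ x₁² + ⋯ + x_{n-1}²}`. -/
def solidParaboloid (n : ℕ) (hn : 0 < n) : Set (EuclideanSpace ℝ (Fin n)) :=
  {x | ∑ j ∈ Finset.univ.filter (fun j : Fin n => (j : ℕ) < n - 1), x j ^ 2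
        ≤ x ⟨n - 1, Nat.sub_lt hn one_pos⟩}

/-!
Write `ξ = (ξ', c)` with `c = ξₙ` and `m = n - 1`.

If `c = 0`, the hyperplane contains the vertical direction, and its intersection with `P`
contains `m`-dimensional balls of every radius, so the section has infinite measure.

If `c ≠ 0`, the hyperplane is the graph of `y ↦ t / c + ⟪y, w⟫` with `w = -ξ' / c`, and the
section is the graph over `{y | ‖y‖² ≤ t / c + ⟪y, w⟫}`. Completing the square, this is a ball
of squared radius `ρ = (4ct + 1 - c²) / (4c²)`, and the linear part `y ↦ (y, ⟪y, w⟫)` scales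
`m`-dimensional Hausdorff measure by its norm determinant `√(1 + ‖w‖²) = 1 / |c|`. Hence
`A_P(ξ, t) = |c|⁻¹ ρ^(m/2) κ` with `κ` the measure of the unit ball, and squaring clears the roots:
`4ᵐ c^(2m+2) A² = κ² (4ct + 1 - c²)ᵐ`.
-/

open Metric Module RealInnerProductSpace

namespace EuclideanSpace

variable {m : ℕ}

def snoc (y : EuclideanSpace ℝ (Fin m)) (a : ℝ) : EuclideanSpace ℝ (Fin (m + 1)) :=
  WithLp.toLp 2 (Fin.snoc y.ofLp a)

def init (x : EuclideanSpace ℝ (Fin (m + 1))) : EuclideanSpace ℝ (Fin m) :=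
  WithLp.toLp 2 (Fin.init x.ofLp)

@[simp]
lemma snoc_apply_castSucc (y : EuclideanSpace ℝ (Fin m)) (a : ℝ) (i : Fin m) :
    snoc y a i.castSucc = y i := by
  simp [snoc]

@[simp]
lemma snoc_apply_last (y : EuclideanSpace ℝ (Fin m)) (a : ℝ) : snoc y a (Fin.last m) = a := by
  simp [snoc]

@[simp]
lemma init_snoc (y : EuclideanSpace ℝ (Fin m)) (a : ℝ) : init (snoc y a) = y := by
  ext i
  simp [init, snoc]

@[simp]
lemma snoc_init (x : EuclideanSpace ℝ (Fin (m + 1))) : snoc (init x) (x (Fin.last m)) = x :=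
  congrArg (WithLp.toLp 2) (Fin.snoc_init_self x.ofLp)

lemma exists_eq_snoc (x : EuclideanSpace ℝ (Fin (m + 1))) : ∃ y a, x = snoc y a :=
  ⟨_, _, (snoc_init x).symm⟩

lemma snoc_inj {y z : EuclideanSpace ℝ (Fin m)} {a b : ℝ} :
    snoc y a = snoc z b ↔ y = z ∧ a = b := by
  refine ⟨fun h ↦ ⟨?_, ?_⟩, fun h ↦ h.1 ▸ h.2 ▸ rfl⟩
  · simpa using congrArg init h
  · simpa using congrArg (· (Fin.last m)) h

@[simp]
lemma snoc_add_snoc (y z : EuclideanSpace ℝ (Fin m)) (a b : ℝ) :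
    snoc y a + snoc z b = snoc (y + z) (a + b) := by
  ext i
  refine Fin.lastCases ?_ (fun j ↦ ?_) i <;> simp

@[simp]
lemma snoc_sub_snoc (y z : EuclideanSpace ℝ (Fin m)) (a b : ℝ) :
    snoc y a - snoc z b = snoc (y - z) (a - b) := by
  ext i
  refine Fin.lastCases ?_ (fun j ↦ ?_) i <;> simp

@[simp]
lemma smul_snoc (r : ℝ) (y : EuclideanSpace ℝ (Fin m)) (a : ℝ) :
    r • snoc y a = snoc (r • y) (r * a) := by
  ext i
  refine Fin.lastCases ?_ (fun j ↦ ?_) i <;> simp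

lemma inner_snoc_snoc (y z : EuclideanSpace ℝ (Fin m)) (a b : ℝ) :
    ⟪snoc y a, snoc z b⟫ = ⟪y, z⟫ + a * b := by
  simp [PiLp.inner_apply, Fin.sum_univ_castSucc, mul_comm]

lemma norm_snoc_sq (y : EuclideanSpace ℝ (Fin m)) (a : ℝ) :
    ‖snoc y a‖ ^ 2 = ‖y‖ ^ 2 + a ^ 2 := by
  rw [← real_inner_self_eq_norm_sq, ← real_inner_self_eq_norm_sq, inner_snoc_snoc, sq]

end EuclideanSpace

open EuclideanSpace

open Filter Topology in
lemma MeasureTheory.Measure.addHaar_eq_top_of_forall_closedBall_subset {E : Type*}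
    [NormedAddCommGroup E] [NormedSpace ℝ E] [MeasurableSpace E] [BorelSpace E]
    [FiniteDimensional ℝ E] [Nontrivial E] (μ : Measure E) [μ.IsAddHaarMeasure] {s : Set E}
    (h : ∀ r, 0 ≤ r → ∃ x, closedBall x r ⊆ s) : μ s = ⊤ := by
  have hlim : Tendsto (fun r : ℝ ↦ ENNReal.ofReal (r ^ finrank ℝ E) * μ (ball 0 1))
      atTop (𝓝 ⊤) := by
    rw [← ENNReal.top_mul (measure_ball_pos μ 0 one_pos).ne']
    exact ENNReal.Tendsto.mul_const
      (ENNReal.tendsto_ofReal_atTop.comp (tendsto_pow_atTop finrank_pos.ne'))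
      (Or.inl ENNReal.top_ne_zero)
  refine top_unique (le_of_tendsto hlim ?_)
  filter_upwards [eventually_ge_atTop 0] with r hr
  obtain ⟨x, hx⟩ := h r hr
  rw [← Measure.addHaar_closedBall μ x hr]
  exact measure_mono hx

lemma setOf_norm_sq_le_add_inner {E : Type*} [NormedAddCommGroup E] [InnerProductSpace ℝ E]
    (s : ℝ) (w : E) :
    {y : E | ‖y‖ ^ 2 ≤ s + ⟪y, w⟫} = {y | ‖y - (2⁻¹ : ℝ) • w‖ ^ 2 ≤ s + ‖w‖ ^ 2 / 4} := by
  ext y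
  have : ‖y - (2⁻¹ : ℝ) • w‖ ^ 2 = ‖y‖ ^ 2 - ⟪y, w⟫ + ‖w‖ ^ 2 / 4 := by
    rw [norm_sub_sq_real, real_inner_smul_right, norm_smul, mul_pow, norm_inv, Real.norm_two]
    ring
  simp only [Set.mem_ofPred_eq, this]
  constructor <;> intro <;> linarith

lemma setOf_norm_sub_sq_le {E : Type*} [NormedAddCommGroup E] (a : E) {ρ : ℝ} (hρ : 0 ≤ ρ) :
    {y : E | ‖y - a‖ ^ 2 ≤ ρ} = closedBall a √ρ := by
  ext y
  rw [mem_closedBall, dist_eq_norm, Real.le_sqrt (norm_nonneg _) hρ, Set.mem_ofPred_eq]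

lemma hausdorffMeasure_inter_setOf_inner_eq {E : Type*} [NormedAddCommGroup E]
    [InnerProductSpace ℝ E] [MeasurableSpace E] [BorelSpace E] {ν : E} (hν : ‖ν‖ = 1)
    (S : Set E) (t : ℝ) {d : ℝ} (hd : 0 ≤ d) :
    μH[d] (S ∩ {x | ⟪x, ν⟫ = t}) = μH[d] {w : (ℝ ∙ ν)ᗮ | t • ν + (w : E) ∈ S} := by
  have himage : S ∩ {x | ⟪x, ν⟫ = t} =
      (fun w : (ℝ ∙ ν)ᗮ ↦ t • ν + (w : E)) '' {w | t • ν + (w : E) ∈ S} := by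
    ext x
    constructor
    · rintro ⟨hS, hx⟩
      have hxW : x - t • ν ∈ (ℝ ∙ ν)ᗮ := by
        rw [Submodule.mem_orthogonal_singleton_iff_inner_right, inner_sub_right,
          real_inner_smul_right, real_inner_self_eq_norm_sq, hν, real_inner_comm, hx.out]
        ring
      exact ⟨⟨x - t • ν, hxW⟩, by simpa using hS, by simp⟩
    · rintro ⟨w, hw, rfl⟩
      have : ⟪ν, (w : E)⟫ = 0 := Submodule.mem_orthogonal_singleton_iff_inner_right.1 w.2
      refine ⟨hw, ?_⟩
      rw [Set.mem_ofPred_eq, inner_add_left, real_inner_smul_left, real_inner_self_eq_norm_sq, hν,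
        real_inner_comm, this]
      ring
  rw [himage, ((isometry_add_left _).comp isometry_subtype_coe).hausdorffMeasure_image (.inl hd)]

def paraboloid (m : ℕ) : Set (EuclideanSpace ℝ (Fin (m + 1))) :=
  {x | ∑ i : Fin m, x i.castSucc ^ 2 ≤ x (Fin.last m)}

lemma solidParaboloid_eq_paraboloid (m : ℕ) (h : 0 < m + 1) :
    solidParaboloid (m + 1) h = paraboloid m := by
  ext x
  simp [solidParaboloid, paraboloid, Finset.sum_filter, Fin.sum_univ_castSucc, Fin.last]

noncomputable def hausdorffMeasureUnitBall (m : ℕ) : ℝ :=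
  (μH[m] (ball (0 : EuclideanSpace ℝ (Fin m)) 1)).toReal

lemma hausdorffMeasureUnitBall_pos (m : ℕ) : 0 < hausdorffMeasureUnitBall m :=
  ENNReal.toReal_pos (measure_ball_pos _ _ one_pos).ne' measure_ball_lt_top.ne

section Paraboloid

variable {m : ℕ}

noncomputable def graphLinearMap (w : EuclideanSpace ℝ (Fin m)) :
    EuclideanSpace ℝ (Fin m) →ₗ[ℝ] EuclideanSpace ℝ (Fin (m + 1)) where
  toFun y := snoc y ⟪y, w⟫
  map_add' y z := by simp [inner_add_left]
  map_smul' r y := by simp [real_inner_smul_left]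

lemma inner_graphLinearMap (w y z : EuclideanSpace ℝ (Fin m)) :
    ⟪graphLinearMap w y, graphLinearMap w z⟫ = ⟪y, z⟫ + ⟪y, w⟫ * ⟪z, w⟫ :=
  inner_snoc_snoc ..

lemma normDet_graphLinearMap (w : EuclideanSpace ℝ (Fin m)) :
    (graphLinearMap w).normDet = √(1 + ‖w‖ ^ 2) := by
  have hgram : Matrix.gram ℝ (graphLinearMap w <| EuclideanSpace.basisFun (Fin m) ℝ ·) =
      1 + Matrix.replicateCol Unit w.ofLp * Matrix.replicateRow Unit w.ofLp := by
    ext i j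
    simp [inner_graphLinearMap, Matrix.one_apply, EuclideanSpace.inner_single_left,
      Matrix.mul_apply]
  have hsq : (graphLinearMap w).normDet ^ 2 = 1 + ‖w‖ ^ 2 := by
    have := (graphLinearMap w).normDet_sq_eq_det_gram (EuclideanSpace.basisFun (Fin m) ℝ)
    rw [hgram, Matrix.det_one_add_replicateCol_mul_replicateRow] at this
    rw [EuclideanSpace.real_norm_sq_eq]
    simpa [dotProduct, sq] using this
  rw [← hsq, Real.sqrt_sq (LinearMap.normDet_nonneg _)]

lemma snoc_mem_paraboloid_iff (y : EuclideanSpace ℝ (Fin m)) (a : ℝ) :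
    snoc y a ∈ paraboloid m ↔ ‖y‖ ^ 2 ≤ a := by
  simp [paraboloid, EuclideanSpace.norm_sq_eq]

lemma hausdorffMeasure_paraboloid_inter_vertical {ξ : EuclideanSpace ℝ (Fin m)}
    (hξ : ‖ξ‖ = 1) (t : ℝ) :
    μH[m] (paraboloid m ∩ {x | ⟪x, snoc ξ 0⟫ = t}) = ⊤ := by
  have hν : ‖snoc ξ 0‖ = 1 := by
    rw [← Real.sqrt_sq (norm_nonneg _), norm_snoc_sq, hξ]
    norm_num
  set W := (ℝ ∙ snoc ξ 0)ᗮ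
  have : Fact (finrank ℝ (EuclideanSpace ℝ (Fin (m + 1))) = m + 1) :=
    ⟨finrank_euclideanSpace_fin⟩
  have hW : finrank ℝ W = m :=
    Submodule.finrank_orthogonal_span_singleton (norm_ne_zero_iff.1 (hν ▸ one_ne_zero))
  have hmemW {y : EuclideanSpace ℝ (Fin m)} {b : ℝ} : snoc y b ∈ W ↔ ⟪ξ, y⟫ = 0 := by
    simp [W, Submodule.mem_orthogonal_singleton_iff_inner_right, inner_snoc_snoc]
  have : Nontrivial W := nontrivial_of_ne ⟨snoc 0 1, hmemW.2 (inner_zero_right _)⟩ 0 fun h ↦ by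
    simpa using congrArg (fun w : W ↦ (w : EuclideanSpace ℝ (Fin (m + 1))) (Fin.last m)) h
  rw [hausdorffMeasure_inter_setOf_inner_eq hν _ _ (Nat.cast_nonneg m)]
  suffices μH[(finrank ℝ W : ℝ)] {w : W | t • snoc ξ 0 + (w : _) ∈ paraboloid m} = ⊤ by
    rwa [hW] at this
  refine Measure.addHaar_eq_top_of_forall_closedBall_subset _ fun r hr ↦ ?_
  -- on the ball of radius `r` about `(0, t² + r² + r)`, `‖y‖² ≤ r²` and the last coordinate
  -- is at least `t² + r²`, while `‖t • ξ + y‖² = t² + ‖y‖²` since `y ⊥ ξ`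
  refine ⟨⟨snoc 0 (t ^ 2 + r ^ 2 + r), hmemW.2 (inner_zero_right _)⟩, fun w hw ↦ ?_⟩
  obtain ⟨y, b, hyb⟩ := exists_eq_snoc (w : EuclideanSpace ℝ (Fin (m + 1)))
  have hy : ⟪ξ, y⟫ = 0 := hmemW.1 (hyb ▸ w.2)
  have hdist : ‖y‖ ^ 2 + (b - (t ^ 2 + r ^ 2 + r)) ^ 2 ≤ r ^ 2 := by
    have : ‖(w : EuclideanSpace ℝ (Fin (m + 1))) - snoc 0 (t ^ 2 + r ^ 2 + r)‖ ≤ r := hw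
    rw [hyb, snoc_sub_snoc, sub_zero] at this
    rw [← norm_snoc_sq]
    exact pow_le_pow_left₀ (norm_nonneg _) this 2
  change t • snoc ξ 0 + (w : EuclideanSpace ℝ (Fin (m + 1))) ∈ paraboloid m
  rw [hyb, smul_snoc, snoc_add_snoc, snoc_mem_paraboloid_iff, norm_add_sq_real, norm_smul,
    real_inner_smul_left, hy, mul_pow, Real.norm_eq_abs, sq_abs, hξ]
  nlinarith

lemma paraboloid_inter_graph_eq_image (s : ℝ) (w : EuclideanSpace ℝ (Fin m)) :
    paraboloid m ∩ {x | x (Fin.last m) = s + ⟪init x, w⟫} =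
      (snoc 0 s + graphLinearMap w ·) '' {y | ‖y‖ ^ 2 ≤ s + ⟪y, w⟫} := by
  ext x
  obtain ⟨y, a, rfl⟩ := exists_eq_snoc x
  simp only [Set.mem_inter_iff, snoc_mem_paraboloid_iff, Set.mem_ofPred_eq, init_snoc,
    snoc_apply_last, Set.mem_image, graphLinearMap, LinearMap.coe_mk, AddHom.coe_mk,
    snoc_add_snoc, zero_add, snoc_inj]
  constructor
  · rintro ⟨h, rfl⟩
    exact ⟨y, h, rfl, rfl⟩
  · rintro ⟨z, h, rfl, rfl⟩
    exact ⟨h, rfl⟩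

lemma hausdorffMeasure_paraboloid_inter_graph (s : ℝ) (w : EuclideanSpace ℝ (Fin m)) :
    μH[m] (paraboloid m ∩ {x | x (Fin.last m) = s + ⟪init x, w⟫}) =
      ENNReal.ofReal √(1 + ‖w‖ ^ 2) *
        μH[m] {y | ‖y - (2⁻¹ : ℝ) • w‖ ^ 2 ≤ s + ‖w‖ ^ 2 / 4} := by
  have htrans : Isometry (snoc 0 s + · : EuclideanSpace ℝ (Fin (m + 1)) → _) :=
    isometry_add_left _
  rw [paraboloid_inter_graph_eq_image, ← Set.image_image, htrans.hausdorffMeasure_image (by simp),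
    ← setOf_norm_sq_le_add_inner, ← normDet_graphLinearMap]
  simpa using (graphLinearMap w).hausdorffMeasure_image {y | ‖y‖ ^ 2 ≤ s + ⟪y, w⟫}

lemma setOf_inner_eq_eq_setOf_last_eq {ξ : EuclideanSpace ℝ (Fin (m + 1))}
    (hc : ξ (Fin.last m) ≠ 0) (t : ℝ) :
    {x | ⟪x, ξ⟫ = t} =
      {x | x (Fin.last m) = t / ξ (Fin.last m) + ⟪init x, -(ξ (Fin.last m))⁻¹ • init ξ⟫} := by
  ext x
  obtain ⟨y, a, rfl⟩ := exists_eq_snoc x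
  obtain ⟨ξ', c, rfl⟩ := exists_eq_snoc ξ
  rw [snoc_apply_last] at hc
  simp only [Set.mem_ofPred_eq, inner_snoc_snoc, init_snoc, snoc_apply_last,
    real_inner_smul_right]
  field_simp
  constructor <;> intro <;> linarith

lemma nonneg_of_hausdorffMeasure_paraboloid_inter_graph_pos {s : ℝ}
    {w : EuclideanSpace ℝ (Fin m)}
    (hpos : 0 < μH[m] (paraboloid m ∩ {x | x (Fin.last m) = s + ⟪init x, w⟫})) :
    0 ≤ s + ‖w‖ ^ 2 / 4 := by
  by_contra! hρ
  have hempty : {y | ‖y - (2⁻¹ : ℝ) • w‖ ^ 2 ≤ s + ‖w‖ ^ 2 / 4} = ∅ :=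
    Set.eq_empty_of_forall_notMem fun y hy ↦ (hρ.trans_le (sq_nonneg _)).not_ge hy
  simp [hausdorffMeasure_paraboloid_inter_graph, hempty] at hpos

lemma hausdorffMeasure_paraboloid_inter_graph_toReal_sq {s : ℝ}
    {w : EuclideanSpace ℝ (Fin m)} (hρ : 0 ≤ s + ‖w‖ ^ 2 / 4) :
    (μH[m] (paraboloid m ∩ {x | x (Fin.last m) = s + ⟪init x, w⟫})).toReal ^ 2 =
      (1 + ‖w‖ ^ 2) * (s + ‖w‖ ^ 2 / 4) ^ m * hausdorffMeasureUnitBall m ^ 2 := by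
  rw [hausdorffMeasure_paraboloid_inter_graph, setOf_norm_sub_sq_le _ hρ,
    Measure.addHaar_closedBall _ _ (Real.sqrt_nonneg _), finrank_euclideanSpace_fin,
    ENNReal.toReal_mul, ENNReal.toReal_mul, ENNReal.toReal_ofReal (Real.sqrt_nonneg _),
    ENNReal.toReal_ofReal (by positivity), ← hausdorffMeasureUnitBall, mul_pow, mul_pow,
    Real.sq_sqrt (by positivity), ← pow_mul, mul_comm m 2, pow_mul, Real.sq_sqrt hρ, mul_assoc]

lemma paraboloid_section_sq_eq {ξ : EuclideanSpace ℝ (Fin (m + 1))} (hξ : ‖ξ‖ = 1)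
    {t : ℝ} (hpos : 0 < μH[m] (paraboloid m ∩ {x | ⟪x, ξ⟫ = t}))
    (hfin : μH[m] (paraboloid m ∩ {x | ⟪x, ξ⟫ = t}) < ⊤) :
    4 ^ m * ξ (Fin.last m) ^ (2 * m + 2) * (μH[m] (paraboloid m ∩ {x | ⟪x, ξ⟫ = t})).toReal ^ 2 =
      hausdorffMeasureUnitBall m ^ 2 * (4 * ξ (Fin.last m) * t + 1 - ξ (Fin.last m) ^ 2) ^ m := by
  obtain ⟨ξ', c, rfl⟩ := exists_eq_snoc ξ
  have hξ' : ‖ξ'‖ ^ 2 = 1 - c ^ 2 := by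
    have := norm_snoc_sq ξ' c
    rw [hξ] at this
    linarith
  rw [snoc_apply_last]
  rcases eq_or_ne c 0 with rfl | hc
  · have : ‖ξ'‖ = 1 :=
      (pow_eq_one_iff_of_nonneg (norm_nonneg _) two_ne_zero).1 (by simpa using hξ')
    rw [hausdorffMeasure_paraboloid_inter_vertical this] at hfin
    exact absurd hfin (lt_irrefl _)
  have hcξ : (snoc ξ' c) (Fin.last m) ≠ 0 := by simpa using hc
  rw [setOf_inner_eq_eq_setOf_last_eq hcξ] at hpos ⊢
  simp only [snoc_apply_last, init_snoc] at hpos ⊢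
  have hw : ‖-c⁻¹ • ξ'‖ ^ 2 = (1 - c ^ 2) / c ^ 2 := by
    rw [norm_smul, mul_pow, hξ', norm_neg, norm_inv, Real.norm_eq_abs, inv_pow, sq_abs]
    ring
  rw [hausdorffMeasure_paraboloid_inter_graph_toReal_sq
    (nonneg_of_hausdorffMeasure_paraboloid_inter_graph_pos hpos), hw,
    show t / c + (1 - c ^ 2) / c ^ 2 / 4 = (4 * c * t + 1 - c ^ 2) / (4 * c ^ 2) by
      field_simp; ring,
    div_pow, mul_pow, ← pow_mul]
  field_simp
  ring

end Paraboloid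

theorem paraboloid_section_function_algebraic
    {n : ℕ} (hn : 2 ≤ n) :
    ∃ (q : MvPolynomial (Fin n) ℝ) (p : Polynomial (MvPolynomial (Fin n) ℝ)),
      q ≠ 0 ∧ p ≠ 0 ∧
      ∀ ξ : EuclideanSpace ℝ (Fin n), ‖ξ‖ = 1 → ∀ t : ℝ,
        0 < secFunE (solidParaboloid n (by omega)) ξ t →
        secFunE (solidParaboloid n (by omega)) ξ t < ⊤ →
        MvPolynomial.eval (fun i => ξ i) q *
            ((secFunE (solidParaboloid n (by omega)) ξ t).toReal) ^ 2 +
          Polynomial.eval t (Polynomial.map (MvPolynomial.eval fun i => ξ i) p) = 0 := by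
  obtain ⟨m, rfl⟩ : ∃ m, n = m + 1 := ⟨n - 1, by omega⟩
  have hsec (h : 0 < m + 1) (ξ : EuclideanSpace ℝ (Fin (m + 1))) (t : ℝ) :
      secFunE (solidParaboloid (m + 1) h) ξ t = μH[m] (paraboloid m ∩ {x | ⟪x, ξ⟫ = t}) := by
    rw [secFunE, solidParaboloid_eq_paraboloid, Nat.cast_add_one, add_sub_cancel_right]
  let q : MvPolynomial (Fin (m + 1)) ℝ :=
    MvPolynomial.C (4 ^ m) * MvPolynomial.X (Fin.last m) ^ (2 * m + 2)
  let p : Polynomial (MvPolynomial (Fin (m + 1)) ℝ) :=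
    -(Polynomial.C (MvPolynomial.C (hausdorffMeasureUnitBall m ^ 2)) *
      (Polynomial.C (MvPolynomial.C 4 * MvPolynomial.X (Fin.last m)) * Polynomial.X +
        Polynomial.C (1 - MvPolynomial.X (Fin.last m) ^ 2)) ^ m)
  have hq (x : Fin (m + 1) → ℝ) :
      MvPolynomial.eval x q = 4 ^ m * x (Fin.last m) ^ (2 * m + 2) := by
    simp [q]
  have hp (x : Fin (m + 1) → ℝ) (t : ℝ) :
      (p.map (MvPolynomial.eval x)).eval t =
        -(hausdorffMeasureUnitBall m ^ 2 *
          (4 * x (Fin.last m) * t + 1 - x (Fin.last m) ^ 2) ^ m) := by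
    simp [p, ← add_sub_assoc]
  refine ⟨q, p, fun h ↦ ?_, fun h ↦ ?_, fun ξ hξ t hpos hfin ↦ ?_⟩
  · exact pow_ne_zero m four_ne_zero (by simpa [h] using (hq 1).symm)
  · simpa [h, (hausdorffMeasureUnitBall_pos m).ne'] using hp 0 0
  · rw [hsec] at hpos hfin ⊢
    rw [hq, hp]
    linear_combination paraboloid_section_sq_eq hξ hpos hfin
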